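/- Under the assumptions that K̃ = (1-p)K + pK̄ with K positive semidefinite of trace at most n, K̄ = (1/D)J, λ > 0, and (n/λ)(1-p)(1+1/D) < 1, the geometric difference satisfies ‖(K̃+λI)^{-1} − (K̄+λI)^{-1}‖₂ ≤ [ (n/λ²)(1-p)(1+1/D) ] / [ 1 − (n/λ)(1-p)(1+1/D) ]. -/

import Mathlib

/-!
Both `K̃ + λI` and `K̄ + λI` are a positive semidefinite matrix plus `λI`, so their inverses have
spectral norm at most `1/λ`. The resolvent identity `A⁻¹ - B⁻¹ = A⁻¹ (B - A) B⁻¹` then bounds the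
difference by `‖K̄ - K̃‖ / λ²`, and `K̄ - K̃ = (1 - p)(K̄ - K)`, where the spectral norm of each of the
positive semidefinite matrices `K` and `K̄` is at most its trace (`≤ n` and `n / D`). This gives
`t / λ` with `t = (n/λ)(1-p)(1+1/D)`, which is at most `(t / λ) / (1 - t)` since `0 ≤ t < 1`.
-/

open Matrix

/-- The spectral (ℓ²-operator) norm of a real square matrix. -/
noncomputable def matrixSpectralNorm {n : ℕ} (A : Matrix (Fin n) (Fin n) ℝ) : ℝ :=
  ‖Matrix.toEuclideanCLM (𝕜 := ℝ) A‖

open scoped Matrix.Norms.L2Operator RealInnerProductSpace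

theorem mul_norm_le_norm_of_mul_sq_le_inner {E : Type*} [NormedAddCommGroup E]
    [InnerProductSpace ℝ E] {f : E → E} {c : ℝ} (hf : ∀ x, c * ‖x‖ ^ 2 ≤ ⟪f x, x⟫) (x : E) :
    c * ‖x‖ ≤ ‖f x‖ := by
  rcases (norm_nonneg x).eq_or_lt with hx | hx
  · rw [← hx, mul_zero]
    exact norm_nonneg _
  · refine le_of_mul_le_mul_right ?_ hx
    calc c * ‖x‖ * ‖x‖ = c * ‖x‖ ^ 2 := by ring
      _ ≤ ⟪f x, x⟫ := hf x
      _ ≤ ‖f x‖ * ‖x‖ := real_inner_le_norm _ _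

namespace Matrix

variable {n : Type*} [Fintype n]

theorem posSemidef_of_forall_apply_eq_one {R : Type*} [CommRing R] [PartialOrder R]
    [StarRing R] [StarOrderedRing R] {J : Matrix n n R} (hJ : ∀ i j, J i j = 1) :
    J.PosSemidef := by
  convert posSemidef_vecMulVec_self_star (fun _ : n => (1 : R))
  ext i j
  simp [hJ, vecMulVec_apply]

variable [DecidableEq n]

theorem PosSemidef.l2_opNorm_le_trace {K : Matrix n n ℝ} (hK : K.PosSemidef) :
    ‖K‖ ≤ K.trace := by
  have hH := hK.isHermitian
  rw [hH.trace_eq_sum_eigenvalues]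
  conv_lhs => rw [hH.spectral_theorem]
  rw [Unitary.conjStarAlgAut_apply, ← Unitary.coe_star, CStarRing.norm_mul_coe_unitary,
    CStarRing.norm_coe_unitary_mul, l2_opNorm_diagonal]
  refine (pi_norm_le_iff_of_nonneg (Finset.sum_nonneg fun j _ => hK.eigenvalues_nonneg j)).mpr
    fun i => ?_
  simp only [Function.comp_apply, RCLike.ofReal_real_eq_id, id, Real.norm_eq_abs]
  rw [abs_of_nonneg (hK.eigenvalues_nonneg i)]
  exact Finset.single_le_sum (fun j _ => hK.eigenvalues_nonneg j) (Finset.mem_univ i)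

theorem PosSemidef.mul_sq_le_inner_toEuclideanCLM_add_smul_one {M : Matrix n n ℝ}
    (hM : M.PosSemidef) (lam : ℝ) (x : EuclideanSpace ℝ n) :
    lam * ‖x‖ ^ 2 ≤ ⟪toEuclideanCLM (𝕜 := ℝ) (M + lam • 1) x, x⟫ := by
  have hMx : 0 ≤ ⟪toEuclideanCLM (𝕜 := ℝ) M x, x⟫ :=
    (isPositive_toEuclideanLin_iff.mpr hM).inner_nonneg_left x
  simp only [map_add, map_smul, map_one, _root_.add_apply, _root_.smul_apply, one_apply_eq_self,
    inner_add_left, real_inner_smul_left, real_inner_self_eq_norm_sq]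
  linarith

theorem PosSemidef.isUnit_add_smul_one {M : Matrix n n ℝ} (hM : M.PosSemidef) {lam : ℝ}
    (hlam : 0 < lam) : IsUnit (M + lam • 1) :=
  (PosDef.posSemidef_add hM (PosDef.one.smul hlam)).isUnit

theorem PosSemidef.l2_opNorm_inv_add_smul_one_le {M : Matrix n n ℝ} (hM : M.PosSemidef)
    {lam : ℝ} (hlam : 0 < lam) : ‖(M + lam • 1)⁻¹‖ ≤ lam⁻¹ := by
  have hdet := (isUnit_iff_isUnit_det _).mp (hM.isUnit_add_smul_one hlam)
  rw [cstar_norm_def]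
  refine ContinuousLinearMap.opNorm_le_bound _ (by positivity) fun y => ?_
  set x := toEuclideanCLM (𝕜 := ℝ) (M + lam • 1)⁻¹ y
  have hxy : toEuclideanCLM (𝕜 := ℝ) (M + lam • 1) x = y := by
    rw [← mul_apply_eq_comp, ← map_mul, mul_nonsing_inv _ hdet, map_one, one_apply_eq_self]
  have hcoercive := mul_norm_le_norm_of_mul_sq_le_inner
    (hM.mul_sq_le_inner_toEuclideanCLM_add_smul_one lam) x
  rw [hxy] at hcoercive
  rwa [inv_mul_eq_div, le_div_iff₀' hlam]

theorem PosSemidef.l2_opNorm_inv_add_smul_one_sub_le {M N : Matrix n n ℝ} (hM : M.PosSemidef)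
    (hN : N.PosSemidef) {lam : ℝ} (hlam : 0 < lam) :
    ‖(M + lam • 1)⁻¹ - (N + lam • 1)⁻¹‖ ≤ ‖N - M‖ / lam ^ 2 := by
  rw [inv_sub_inv (iff_of_true (hM.isUnit_add_smul_one hlam) (hN.isUnit_add_smul_one hlam)),
    add_sub_add_right_eq_sub]
  calc ‖(M + lam • 1)⁻¹ * (N - M) * (N + lam • 1)⁻¹‖
      ≤ ‖(M + lam • 1)⁻¹‖ * ‖N - M‖ * ‖(N + lam • 1)⁻¹‖ := norm_mul₃_le
    _ ≤ lam⁻¹ * ‖N - M‖ * lam⁻¹ := by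
      gcongr
      · exact hM.l2_opNorm_inv_add_smul_one_le hlam
      · exact hN.l2_opNorm_inv_add_smul_one_le hlam
    _ = ‖N - M‖ / lam ^ 2 := by ring

end Matrix

theorem geometric_difference_bound_general
    (n : ℕ) (D : ℝ) (hD : 0 < D) (p : ℝ) (hp0 : 0 ≤ p) (hp1 : p ≤ 1)
    (lam : ℝ) (hlam : 0 < lam)
    (K : Matrix (Fin n) (Fin n) ℝ) (hK : K.PosSemidef) (hKtr : K.trace ≤ n)
    (J : Matrix (Fin n) (Fin n) ℝ) (hJ : ∀ i j, J i j = 1)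
    (hsmall : (n / lam) * (1 - p) * (1 + 1 / D) < 1) :
    matrixSpectralNorm
        ((((1 - p) • K + p • ((1 / D) • J)) + lam • (1 : Matrix (Fin n) (Fin n) ℝ))⁻¹
          - ((1 / D) • J + lam • (1 : Matrix (Fin n) (Fin n) ℝ))⁻¹)
      ≤ ((n / lam ^ 2) * (1 - p) * (1 + 1 / D))
          / (1 - (n / lam) * (1 - p) * (1 + 1 / D)) := by
  rw [matrixSpectralNorm, ← cstar_norm_def]
  set Kbar := (1 / D) • J
  have hq : 0 ≤ 1 - p := by linarith
  have hKbar : Kbar.PosSemidef := (posSemidef_of_forall_apply_eq_one hJ).smul (by positivity)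
  have hKbar_norm : ‖Kbar‖ ≤ n / D := hKbar.l2_opNorm_le_trace.trans_eq (by
    simp [Kbar, trace, hJ, div_eq_mul_inv])
  have hdiff : ‖Kbar - ((1 - p) • K + p • Kbar)‖ ≤ n * (1 - p) * (1 + 1 / D) := by
    rw [show Kbar - ((1 - p) • K + p • Kbar) = (1 - p) • (Kbar - K) by module, norm_smul,
      Real.norm_of_nonneg hq]
    calc (1 - p) * ‖Kbar - K‖ ≤ (1 - p) * (n / D + n) := by
          gcongr
          exact (norm_sub_le _ _).trans (add_le_add hKbar_norm (hK.l2_opNorm_le_trace.trans hKtr))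
      _ = n * (1 - p) * (1 + 1 / D) := by ring
  have ht : 0 ≤ (n / lam) * (1 - p) * (1 + 1 / D) := by positivity
  calc _ ≤ ‖Kbar - ((1 - p) • K + p • Kbar)‖ / lam ^ 2 :=
        ((hK.smul hq).add (hKbar.smul hp0)).l2_opNorm_inv_add_smul_one_sub_le hKbar hlam
    _ ≤ (n / lam ^ 2) * (1 - p) * (1 + 1 / D) := by
      rw [div_le_iff₀ (by positivity)]
      exact hdiff.trans_eq (by field_simp)
    _ ≤ _ := by apply le_div_self <;> [positivity; linarith; linarith]

/-- Bound on the geometric difference between the noisy kernel matrix and the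
worst-case kernel matrix. -/
theorem geometric_difference_bound
    (n : ℕ) (hn : 1 ≤ n) (D : ℝ) (hD : 0 < D) (p : ℝ) (hp0 : 0 ≤ p) (hp1 : p ≤ 1)
    (lam : ℝ) (hlam : 0 < lam)
    (K : Matrix (Fin n) (Fin n) ℝ) (hK : K.PosSemidef) (hKtr : K.trace ≤ n)
    (J : Matrix (Fin n) (Fin n) ℝ) (hJ : ∀ i j, J i j = 1)
    (hsmall : (n / lam) * (1 - p) * (1 + 1 / D) < 1) :
    matrixSpectralNorm
        ((((1 - p) • K + p • ((1 / D) • J)) + lam • (1 : Matrix (Fin n) (Fin n) ℝ))⁻¹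
          - ((1 / D) • J + lam • (1 : Matrix (Fin n) (Fin n) ℝ))⁻¹)
      ≤ ((n / lam ^ 2) * (1 - p) * (1 + 1 / D))
          / (1 - (n / lam) * (1 - p) * (1 + 1 / D)) :=
  geometric_difference_bound_general n D hD p hp0 hp1 lam hlam K hK hKtr J hJ hsmall
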